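/- arXiv:1905.00067 — 3 statements merged into one kernel-verified Lean document; each statement's English description precedes it below -/
import Mathlib

section
/- If a matrix W ∈ ℝ^{n×n} satisfies C_{p,q} W = W for every pair of distinct indices p, q (where C_{p,q} is the normalized single-edge adjacency matrix), then all rows of W are equal, and hence rank(W) ≤ 1. -/
/-- If `C_{p,q} W = W` for every pair of distinct indices `p ≠ q`, then all rows of
`W` are equal, and hence `rank W ≤ 1`. -/
theorem rows_all_eq_and_rank_le_one (n : ℕ) (hn : 2 ≤ n)
    (C : Fin n → Fin n → Matrix (Fin n) (Fin n) ℝ)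
    (hC : ∀ p q, C p q = Matrix.of fun i j =>
        if (i = p ∨ i = q) ∧ (j = p ∨ j = q) then (1 : ℝ) / 2
        else if i = j then 1 else 0)
    (W : Matrix (Fin n) (Fin n) ℝ)
    (h : ∀ p q, p ≠ q → C p q * W = W) :
    (∀ i j, W i = W j) ∧ W.rank ≤ 1 := by
  have key : ∀ p q : Fin n, p ≠ q → W p = W q := by
    intro p q hpq
    funext k
    have hcw := congrFun (congrFun (h p q hpq) q) k
    rw [hC, Matrix.mul_apply] at hcw
    have hsum : (∑ l, (Matrix.of fun i j =>
        if (i = p ∨ i = q) ∧ (j = p ∨ j = q) then (1 : ℝ) / 2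
        else if i = j then 1 else 0) q l * W l k)
        = (1/2) * W p k + (1/2) * W q k := by
      rw [Finset.sum_eq_add p q hpq]
      · simp [Matrix.of_apply]
      · intro c _ hc
        obtain ⟨hcp, hcq⟩ := hc
        simp [Matrix.of_apply, hcp, hcq, Ne.symm hcq]
      · simp
      · simp
    rw [hsum] at hcw
    linarith
  have keyall : ∀ i j : Fin n, W i = W j := by
    intro i j
    rcases eq_or_ne i j with rfl | hij
    · rfl
    · exact key i j hij
  refine ⟨keyall, ?_⟩
  have hle : LinearMap.range W.mulVecLin ≤
      Submodule.span ℝ {(fun _ => (1 : ℝ) : Fin n → ℝ)} := by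
    rintro _ ⟨x, rfl⟩
    have hzero : 0 < n := by omega
    have h0 : W.mulVecLin x = (∑ j, W ⟨0, hzero⟩ j * x j) • (fun _ => (1 : ℝ)) := by
      funext i
      simp only [Matrix.mulVecLin_apply, Matrix.mulVec, dotProduct,
        Pi.smul_apply, smul_eq_mul, mul_one]
      rw [keyall i ⟨0, hzero⟩]
    rw [h0]
    exact Submodule.smul_mem _ _ (Submodule.mem_span_singleton_self _)
  rw [Matrix.rank]
  calc Module.finrank ℝ (LinearMap.range W.mulVecLin)
      ≤ Module.finrank ℝ (Submodule.span ℝ {(fun _ => (1 : ℝ) : Fin n → ℝ)}) :=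
        Submodule.finrank_mono hle
    _ ≤ 1 := by
        simpa using finrank_span_le_card ({(fun _ => (1 : ℝ) : Fin n → ℝ)} : Set (Fin n → ℝ))
end

section
/- A two-layer MixHop network with powers P = {0,1,2} can represent the two-hop delta operator: there exist weight matrices such that the network output contains σ(ÂX) - σ(Â²X) as a block, for every adjacency matrix Â, feature matrix X, and element-wise function σ. -/
/-- A two-layer MixHop network with powers `P = {0,1,2}` can represent the two-hop
delta operator: there exist first-layer weights `W₀⁰, W₁⁰, W₂⁰` and a second-layer
weight `W₀¹` (with `W₁¹ = W₂¹ = 0`, identity activation in the second layer) such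
that for every adjacency matrix `Â`, features `X`, and element-wise activation `σ`
with `σ 0 = 0`, the output equals `[σ(ÂX) - σ(Â²X) | 0 | 0]`. -/
theorem mixhop_represents_two_hop_delta (n s : ℕ) :
    ∃ (W00 W10 W20 : Matrix (Fin s) (Fin s) ℝ)
      (W01 : Matrix (Fin s ⊕ (Fin s ⊕ Fin s)) (Fin s) ℝ),
      ∀ (Ahat : Matrix (Fin n) (Fin n) ℝ) (X : Matrix (Fin n) (Fin s) ℝ)
        (σ : ℝ → ℝ), σ 0 = 0 →
        let H1 : Matrix (Fin n) (Fin s ⊕ (Fin s ⊕ Fin s)) ℝ :=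
          Matrix.fromCols ((Ahat ^ 0 * X * W00).map σ)
            (Matrix.fromCols ((Ahat ^ 1 * X * W10).map σ) ((Ahat ^ 2 * X * W20).map σ))
        let output : Matrix (Fin n) (Fin s ⊕ (Fin s ⊕ Fin s)) ℝ :=
          Matrix.fromCols (Ahat ^ 0 * H1 * W01)
            (Matrix.fromCols (Ahat ^ 1 * H1 * (0 : Matrix (Fin s ⊕ (Fin s ⊕ Fin s)) (Fin s) ℝ)) (Ahat ^ 2 * H1 * (0 : Matrix (Fin s ⊕ (Fin s ⊕ Fin s)) (Fin s) ℝ)))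
        output =
          Matrix.fromCols ((Ahat * X).map σ - (Ahat ^ 2 * X).map σ)
            (Matrix.fromCols 0 0) := by
  refine ⟨0, 1, 1, Matrix.fromRows 0 (Matrix.fromRows 1 (-1)), ?_⟩
  intro Ahat X σ hσ
  simp only [pow_zero, pow_one, one_mul, mul_zero, mul_one, mul_neg_one,
    Matrix.mul_zero, Matrix.mul_one, Matrix.fromCols_mul_fromRows]
  have h0 : ((0 : Matrix (Fin n) (Fin s) ℝ).map σ) = 0 := by
    ext i j; simp [hσ]
  rw [h0, Matrix.one_mul, Matrix.fromCols_mul_fromRows,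
    Matrix.fromCols_mul_fromRows]
  ext i j
  simp [Matrix.fromCols, Matrix.sub_apply, sub_eq_add_neg]
end

section
/- A two-layer MixHop network with powers P = {0,1,…,m} can represent general layer-wise neighborhood mixing: for any real coefficients α_0,…,α_m there exist weights such that the network output contains Σ_{j=0}^m α_j σ(Â^j X) as a block, for every Â, X, and element-wise σ with σ(0)=0. -/
/-- A two-layer MixHop network with powers `P = {0,…,m}` can represent general
layer-wise neighborhood mixing: with first-layer weights equal to the identity
(so the first-layer output `H1` has blocks `σ(Â^j X)`), second-layer weights
`W_j¹ = 0` for `j ≥ 1` and `W₀¹ = [α₀ I; …; α_m I]`, the (zeroth-power) output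
block equals `Σ_{j=0}^m α_j σ(Â^j X)`, for every `Â`, `X`, and element-wise `σ`
with `σ 0 = 0`. -/
theorem mixhop_represents_general_mixing (n s m : ℕ) (α : Fin (m + 1) → ℝ) :
    ∀ (Ahat : Matrix (Fin n) (Fin n) ℝ) (X : Matrix (Fin n) (Fin s) ℝ)
      (σ : ℝ → ℝ), σ 0 = 0 →
      let H1 : Matrix (Fin n) (Fin (m + 1) × Fin s) ℝ :=
        Matrix.of fun i jk => σ ((Ahat ^ (jk.1 : ℕ) * X) i jk.2)
      let W01 : Matrix (Fin (m + 1) × Fin s) (Fin s) ℝ :=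
        Matrix.of fun jk t => α jk.1 * (if jk.2 = t then 1 else 0)
      Ahat ^ 0 * H1 * W01 = ∑ j : Fin (m + 1), α j • ((Ahat ^ (j : ℕ) * X).map σ) := by
  intro Ahat X σ hσ H1 W01
  ext i t
  simp only [pow_zero, Matrix.one_mul, Matrix.mul_apply, H1, W01, Matrix.of_apply,
    Matrix.sum_apply, Matrix.smul_apply, Matrix.map_apply, smul_eq_mul,
    Fintype.sum_prod_type, mul_ite, mul_one, mul_zero]
  refine Finset.sum_congr rfl fun j _ => ?_
  rw [Finset.sum_ite_eq' _ t]
  simp [mul_comm]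
end
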